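/- For every ε > 0 there exists a constant C (depending only on ε) such that for all real N, K ≥ 1 and all positive integers q, | ∑_{r ≤ K} r ∑_{d ≤ N, gcd(d,q) ∣ r} gcd(d,q) − NK²/2 | ≤ C·K(K+N)·q^ε, where the sums run over positive integers r ≤ K and positive integers d ≤ N with gcd(d,q) dividing r. -/

import Mathlib

/-!
Swapping the two sums, each `d ≤ N` with `e = gcd(d, q)` contributes `e · ∑_{r ≤ K, e ∣ r} r`,
which equals `x (x + e) / 2` for `x = e ⌊K/e⌋ ∈ (K - e, K]`, hence is `K²/2` up to `eK/2`.
Summing over `d` leaves an error `K/2 · ∑_{d ≤ N} gcd(d, q) + K²/2`, and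
`∑_{d ≤ N} gcd(d, q) ≤ τ(q) N` because the `d` with `gcd(d, q) = e` are multiples of `e`.
The divisor bound `τ(q) ≪_ε q^ε` finishes the proof.
-/

open Finset
open scoped Classical

/-- `tauMN M N m` = τ_{M,N}(m): the number of pairs (a,b) of positive integers
with a ≤ M, b ≤ N and a*b = m. -/
noncomputable def tauMN (M N : ℝ) (m : ℕ) : ℕ :=
  (m.divisors.filter (fun a : ℕ => (a : ℝ) ≤ M ∧ ((m / a : ℕ) : ℝ) ≤ N)).card

/-- `tauLe N n` = τ_N(n): the number of divisors d of n with d ≤ N. -/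
noncomputable def tauLe (N : ℝ) (n : ℕ) : ℕ :=
  (n.divisors.filter (fun d : ℕ => (d : ℝ) ≤ N)).card

/-- ‖t‖_q = inf over integers n of |t - q·n|. -/
noncomputable def qnorm (q : ℕ) (t : ℝ) : ℝ := ⨅ n : ℤ, |t - q * n|

/-- The pair correlation function R₂(x, N, α) for the fractional parts of n²α. -/
noncomputable def R2 (x : ℝ) (N : ℕ) (α : ℝ) : ℝ :=
  (((Finset.Icc 1 N) ×ˢ (Finset.Icc 1 N)).filter
    (fun p => p.1 ≠ p.2 ∧ qnorm 1 ((p.1 : ℝ) ^ 2 * α - (p.2 : ℝ) ^ 2 * α) ≤ x / N)).card / N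

/-- The pair correlation of the fractional parts of n²α is Poissonian. -/
def PoissonianPC (α : ℝ) : Prop :=
  ∀ x : ℝ, 0 < x → Filter.Tendsto (fun N : ℕ => R2 x N α) Filter.atTop (nhds (2 * x))

/-- α is of (Diophantine) type κ: |α − p/q| ≥ c/q^κ for some c > 0 and all p ∈ ℤ, q ∈ ℕ. -/
def IsOfType (α κ : ℝ) : Prop :=
  ∃ c : ℝ, 0 < c ∧ ∀ p : ℤ, ∀ q : ℕ, 0 < q → c / (q : ℝ) ^ κ ≤ |α - (p : ℝ) / (q : ℝ)|

/-- The rational p/q is of type (e, 𝒦): |p/q − u/v| ≥ 1/(𝒦 v^e) for all rationals u/v ≠ p/q. -/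
def RatOfType (p : ℤ) (q : ℕ) (e 𝒦 : ℝ) : Prop :=
  ∀ u : ℤ, ∀ v : ℕ, 0 < v → (u : ℝ) / (v : ℝ) ≠ (p : ℝ) / (q : ℝ) →
    1 / (𝒦 * (v : ℝ) ^ e) ≤ |(p : ℝ) / (q : ℝ) - (u : ℝ) / (v : ℝ)|

lemma add_one_le_pow_of_two_le {y : ℝ} (hy : 2 ≤ y) (k : ℕ) : (k : ℝ) + 1 ≤ y ^ k :=
  calc (k : ℝ) + 1 = 1 + k * 1 := by ring
    _ ≤ (1 + 1) ^ k := one_add_mul_le_pow (by norm_num) k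
    _ ≤ y ^ k := pow_le_pow_left₀ (by norm_num) (by linarith) k

lemma add_one_le_mul_pow_of_exp_le {t y : ℝ} (ht : 0 < t) (hy : Real.exp t ≤ y) (k : ℕ) :
    (k : ℝ) + 1 ≤ (1 + t⁻¹) * y ^ k := by
  have hexp : 1 + k * t ≤ y ^ k :=
    calc 1 + k * t ≤ Real.exp (k * t) := by linarith [Real.add_one_le_exp (k * t)]
      _ = Real.exp t ^ k := Real.exp_nat_mul t k
      _ ≤ y ^ k := pow_le_pow_left₀ (Real.exp_pos t).le hy k
  calc (k : ℝ) + 1 ≤ (1 + t⁻¹) * (1 + k * t) := by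
        have : t⁻¹ * t = 1 := inv_mul_cancel₀ ht.ne'
        nlinarith [inv_pos.2 ht, mul_pos (inv_pos.2 ht) ht]
    _ ≤ (1 + t⁻¹) * y ^ k := mul_le_mul_of_nonneg_left hexp (by positivity)

lemma prod_rpow_pow_factorization {n : ℕ} (hn : n ≠ 0) (ε : ℝ) :
    ∏ p ∈ n.primeFactors, ((p : ℝ) ^ ε) ^ n.factorization p = (n : ℝ) ^ ε := by
  conv_rhs => rw [Nat.prod_primeFactors_pow_factorization hn]
  push_cast
  rw [← Real.finsetProd_rpow _ _ (fun p _ => by positivity)]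
  exact prod_congr rfl fun p _ => Real.rpow_pow_comm (Nat.cast_nonneg p) ε _

theorem card_divisors_le_mul_rpow {ε : ℝ} (hε : 0 < ε) :
    ∃ C : ℝ, ∀ q : ℕ, q ≠ 0 → (#q.divisors : ℝ) ≤ C * (q : ℝ) ^ ε := by
  set A := 1 + (Real.log 2 * ε)⁻¹
  have hA : 1 ≤ A := le_add_of_nonneg_right (by positivity)
  -- Primes with `p ^ ε ≥ 2` cost nothing since `k + 1 ≤ 2 ^ k`; each of the fewer than
  -- `2 ^ (1/ε)` others costs at most the factor `A`.
  set c : ℕ → ℝ := fun p => if (p : ℝ) ^ ε < 2 then A else 1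
  refine ⟨A ^ ⌈(2 : ℝ) ^ ε⁻¹⌉₊, fun q hq => ?_⟩
  have hlocal : ∀ p ∈ q.primeFactors,
      (q.factorization p : ℝ) + 1 ≤ c p * ((p : ℝ) ^ ε) ^ q.factorization p := by
    intro p hp
    have hp2 : (2 : ℝ) ≤ p := by exact_mod_cast (Nat.prime_of_mem_primeFactors hp).two_le
    by_cases hsmall : (p : ℝ) ^ ε < 2
    · simp only [c, if_pos hsmall]
      refine add_one_le_mul_pow_of_exp_le (by positivity) ?_ _
      rw [← Real.rpow_def_of_pos two_pos]
      exact Real.rpow_le_rpow zero_le_two hp2 hε.le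
    · simp only [c, if_neg hsmall, one_mul]
      exact add_one_le_pow_of_two_le (not_lt.1 hsmall) _
  have hsmall_primes : ∏ p ∈ q.primeFactors, c p ≤ A ^ ⌈(2 : ℝ) ^ ε⁻¹⌉₊ := by
    rw [prod_ite, prod_const, prod_const_one, mul_one]
    refine pow_le_pow_right₀ hA ((card_le_card fun p hp => ?_).trans (card_range _).le)
    rw [mem_filter] at hp
    rw [mem_range, Nat.lt_ceil]
    exact (Real.lt_rpow_inv_iff_of_pos (by positivity) zero_le_two hε).2 hp.2
  calc (#q.divisors : ℝ) = ∏ p ∈ q.primeFactors, ((q.factorization p : ℝ) + 1) := by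
        rw [Nat.card_divisors hq]; push_cast; rfl
    _ ≤ ∏ p ∈ q.primeFactors, c p * ((p : ℝ) ^ ε) ^ q.factorization p :=
        prod_le_prod (fun _ _ => by positivity) hlocal
    _ = (∏ p ∈ q.primeFactors, c p) * (q : ℝ) ^ ε := by
        rw [prod_mul_distrib, prod_rpow_pow_factorization hq]
    _ ≤ A ^ ⌈(2 : ℝ) ^ ε⁻¹⌉₊ * (q : ℝ) ^ ε := by gcongr

theorem Finset.sum_mul_sum_filter_comm {ι κ R : Type*} [CommSemiring R] (s : Finset ι)
    (t : Finset κ) (P : κ → ι → Prop) [∀ d r, Decidable (P d r)] (a : ι → R) (b : κ → R) :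
    ∑ r ∈ s, a r * ∑ d ∈ t with P d r, b d = ∑ d ∈ t, b d * ∑ r ∈ s with P d r, a r := by
  simp only [mul_sum, sum_filter]
  rw [sum_comm]
  exact sum_congr rfl fun d _ => sum_congr rfl fun r _ => by split_ifs <;> ring

lemma filter_dvd_Icc_eq_image {e : ℕ} (he : 0 < e) (m : ℕ) :
    {r ∈ Icc 1 m | e ∣ r} = (Icc 1 (m / e)).image (e * ·) := by
  ext r
  simp only [mem_filter, mem_Icc, mem_image]
  constructor
  · rintro ⟨⟨hr, hrm⟩, s, rfl⟩
    exact ⟨s, ⟨Nat.pos_of_mul_pos_left hr, (Nat.le_div_iff_mul_le he).2 (by linarith)⟩, rfl⟩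
  · rintro ⟨s, ⟨hs, hsm⟩, rfl⟩
    exact ⟨⟨Nat.mul_pos he hs, (Nat.mul_le_mul_left e hsm).trans (Nat.mul_div_le m e)⟩,
      dvd_mul_right e s⟩

lemma two_mul_sum_Icc_id (M : ℕ) : 2 * ∑ s ∈ Icc 1 M, s = M * (M + 1) := by
  induction M with
  | zero => simp
  | succ M ih => rw [sum_Icc_succ_top (by omega), mul_add, ih]; ring

lemma two_mul_sum_multiples_Icc {e : ℕ} (he : 0 < e) (m : ℕ) :
    2 * ∑ r ∈ Icc 1 m with e ∣ r, r = e * (m / e) * (m / e + 1) := by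
  rw [filter_dvd_Icc_eq_image he, sum_image fun _ _ _ _ h => Nat.eq_of_mul_eq_mul_left he h,
    ← mul_sum, mul_left_comm, two_mul_sum_Icc_id, mul_assoc]

lemma abs_mul_add_sub_sq_le {x e K : ℝ} (hx : 0 ≤ x) (hxK : x ≤ K) (hKx : K ≤ x + e) :
    |x * (x + e) - K ^ 2| ≤ e * K := by
  rw [abs_le]
  constructor <;> nlinarith

lemma abs_mul_sum_multiples_sub_le {e : ℕ} (he : 0 < e) {K : ℝ} (hK : 0 ≤ K) :
    |(e : ℝ) * ∑ r ∈ Icc 1 ⌊K⌋₊ with e ∣ r, (r : ℝ) - K ^ 2 / 2| ≤ e * K / 2 := by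
  set M := ⌊K⌋₊ / e
  have hsum : (e : ℝ) * ∑ r ∈ Icc 1 ⌊K⌋₊ with e ∣ r, (r : ℝ) = (e * M) * (e * M + e) / 2 := by
    have h := congrArg (Nat.cast : ℕ → ℝ) (two_mul_sum_multiples_Icc he ⌊K⌋₊)
    push_cast at h
    linear_combination (e : ℝ) / 2 * h
  have hlow : (e : ℝ) * M ≤ K :=
    calc (e : ℝ) * M = ((e * M : ℕ) : ℝ) := by push_cast; ring
      _ ≤ ⌊K⌋₊ := by exact_mod_cast Nat.mul_div_le ⌊K⌋₊ e
      _ ≤ K := Nat.floor_le hK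
  have hhigh : K ≤ e * M + e :=
    calc K ≤ ⌊K⌋₊ + 1 := (Nat.lt_floor_add_one K).le
      _ ≤ ((e * (M + 1) : ℕ) : ℝ) := by exact_mod_cast Nat.lt_mul_div_succ ⌊K⌋₊ he
      _ = e * M + e := by push_cast; ring
  rw [hsum, ← sub_div, abs_div, abs_two]
  exact div_le_div_of_nonneg_right (abs_mul_add_sub_sq_le (by positivity) hlow hhigh) zero_le_two

lemma abs_sum_mul_sum_multiples_sub_le {ι : Type*} (s : Finset ι) (e : ι → ℕ)
    (he : ∀ i ∈ s, 0 < e i) {K : ℝ} (hK : 0 ≤ K) :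
    |∑ i ∈ s, (e i : ℝ) * ∑ r ∈ Icc 1 ⌊K⌋₊ with e i ∣ r, (r : ℝ) - #s * (K ^ 2 / 2)|
      ≤ (∑ i ∈ s, (e i : ℝ)) * K / 2 :=
  calc _ = |∑ i ∈ s, ((e i : ℝ) * ∑ r ∈ Icc 1 ⌊K⌋₊ with e i ∣ r, (r : ℝ) - K ^ 2 / 2)| := by
        rw [sum_sub_distrib, sum_const, nsmul_eq_mul]
    _ ≤ ∑ i ∈ s, (e i : ℝ) * K / 2 :=
        (abs_sum_le_sum_abs _ _).trans
          (sum_le_sum fun i hi => abs_mul_sum_multiples_sub_le (he i hi) hK)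
    _ = (∑ i ∈ s, (e i : ℝ)) * K / 2 := by rw [sum_mul, sum_div]

lemma sum_gcd_le_card_divisors_mul {q : ℕ} (hq : q ≠ 0) (n : ℕ) :
    ∑ d ∈ Icc 1 n, d.gcd q ≤ #q.divisors * n := by
  have hmaps : ∀ d ∈ Icc 1 n, d.gcd q ∈ q.divisors := fun d _ =>
    Nat.mem_divisors.2 ⟨Nat.gcd_dvd_right d q, hq⟩
  rw [← sum_fiberwise_of_maps_to hmaps, ← smul_eq_mul, ← sum_const]
  refine sum_le_sum fun e he => ?_
  have hfiber : {d ∈ Icc 1 n | d.gcd q = e} ⊆ {d ∈ Ioc 0 n | e ∣ d} := fun d hd => by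
    rw [mem_filter] at hd ⊢
    exact ⟨hd.1, hd.2 ▸ Nat.gcd_dvd_left d q⟩
  calc ∑ d ∈ Icc 1 n with d.gcd q = e, d.gcd q = #{d ∈ Icc 1 n | d.gcd q = e} * e :=
        sum_const_nat fun d hd => (mem_filter.1 hd).2
    _ ≤ n / e * e := Nat.mul_le_mul_right e
        ((card_le_card hfiber).trans (Nat.Ioc_filter_dvd_card_eq_div n e).le)
    _ ≤ n := Nat.div_mul_le_self n e

/-- For every ε > 0 there is C (depending only on ε) such that for all real N, K ≥ 1 and
all positive integers q, |∑_{r ≤ K} r ∑_{d ≤ N, (d,q)∣r} (d,q) − NK²/2| ≤ CK(K+N)q^ε. -/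
theorem gcd_sum_asymptotic_three (ε : ℝ) (hε : 0 < ε) :
    ∃ C : ℝ, ∀ N K : ℝ, 1 ≤ N → 1 ≤ K → ∀ q : ℕ, 0 < q →
      |(∑ r ∈ Finset.Icc 1 ⌊K⌋₊, (r : ℝ) *
          ∑ d ∈ (Finset.Icc 1 ⌊N⌋₊).filter (fun d : ℕ => Nat.gcd d q ∣ r),
            (Nat.gcd d q : ℝ)) - N * K ^ 2 / 2| ≤ C * K * (K + N) * (q : ℝ) ^ ε := by
  obtain ⟨C, hC⟩ := card_divisors_le_mul_rpow hε
  refine ⟨C, fun N K hN hK q hq => ?_⟩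
  rw [sum_mul_sum_filter_comm]
  have hmain := abs_sum_mul_sum_multiples_sub_le (Icc 1 ⌊N⌋₊) (fun d => d.gcd q)
    (fun d _ => Nat.gcd_pos_of_pos_right d hq) (by linarith : (0 : ℝ) ≤ K)
  rw [Nat.card_Icc, Nat.add_sub_cancel] at hmain
  have hgcd : ∑ d ∈ Icc 1 ⌊N⌋₊, (d.gcd q : ℝ) ≤ #q.divisors * ⌊N⌋₊ := by
    exact_mod_cast sum_gcd_le_card_divisors_mul hq.ne' ⌊N⌋₊
  have hτ : 1 ≤ (#q.divisors : ℝ) := by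
    exact_mod_cast card_pos.2 (Nat.nonempty_divisors.2 hq.ne')
  have hτC := hC q hq.ne'
  have hD : 1 ≤ C * q ^ ε := hτ.trans hτC
  have hfloor : (⌊N⌋₊ : ℝ) ≤ N := Nat.floor_le (by linarith)
  have hN_lt : N < ⌊N⌋₊ + 1 := Nat.lt_floor_add_one N
  have hS : ∑ d ∈ Icc 1 ⌊N⌋₊, (d.gcd q : ℝ) ≤ C * q ^ ε * N :=
    hgcd.trans (mul_le_mul hτC hfloor (Nat.cast_nonneg _) (by linarith))
  have hfloor_err : |⌊N⌋₊ * (K ^ 2 / 2) - N * K ^ 2 / 2| ≤ K ^ 2 / 2 := by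
    rw [abs_le]; constructor <;> nlinarith
  calc _ ≤ (∑ d ∈ Icc 1 ⌊N⌋₊, (d.gcd q : ℝ)) * K / 2 + K ^ 2 / 2 :=
        (abs_sub_le _ _ _).trans (add_le_add hmain hfloor_err)
    _ ≤ C * q ^ ε * N * K / 2 + C * q ^ ε * K ^ 2 / 2 := by gcongr; nlinarith
    _ ≤ C * K * (K + N) * q ^ ε := by
        nlinarith [mul_nonneg (mul_nonneg (zero_le_one.trans hD) (by linarith : 0 ≤ K))
          (by linarith : 0 ≤ K + N)]
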